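/- arXiv:0804.4085 — 6 statements merged into one kernel-verified Lean document; each statement's English description precedes it below -/
import Mathlib

section
/- For all y, z, w in V one has g(Q(y,z),w) = −(1/4)[F(y,z,Jw) + F(z,w,Jy) + F(w,y,Jz)]. -/
/-!
Expanding `Q`, every `F`-term with `J` in its first or second slot is moved to the third slot:
`J`-invariance of the last two slots together with `J² = -1` moves it out of the second slot, and
the quasi-Kähler cyclic identity moves it out of the first.
-/

namespace NordenTensor

variable {R V : Type*} [CommRing R] [AddCommGroup V] {F : V → V → V → R} {J : V → V}

theorem apply_J_mid (hJ2 : ∀ x, J (J x) = -x) (hFJ : ∀ x y z, F x y z = F x (J y) (J z))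
    (hneg : ∀ x y z, F x y (-z) = -F x y z) (x y z : V) :
    F x (J y) z = -F x y (J z) := by
  rw [hFJ x y (J z), hJ2, hneg, neg_neg]

theorem apply_J_fst (hJ2 : ∀ x, J (J x) = -x) (hFJ : ∀ x y z, F x y z = F x (J y) (J z))
    (hneg : ∀ x y z, F x y (-z) = -F x y z) (hQK : ∀ x y z, F x y z + F y z x + F z x y = 0)
    (y z w : V) :
    F (J y) z w = F w y (J z) - F z w (J y) := by
  have hcyc := hQK (J y) z w
  rw [apply_J_mid hJ2 hFJ hneg] at hcyc
  linear_combination hcyc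

theorem combination_eq_neg_cyclic_sum (hJ2 : ∀ x, J (J x) = -x)
    (hFsym : ∀ x y z, F x y z = F x z y) (hFJ : ∀ x y z, F x y z = F x (J y) (J z))
    (hneg : ∀ x y z, F x y (-z) = -F x y z) (hQK : ∀ x y z, F x y z + F y z x + F z x y = 0)
    (y z w : V) :
    F y (J z) w - F (J y) z w - 2 * F z (J y) w
      = -(F y z (J w) + F z w (J y) + F w y (J z)) := by
  rw [apply_J_mid hJ2 hFJ hneg, apply_J_fst hJ2 hFJ hneg hQK, hFsym z (J y) w]
  ring

end NordenTensor

theorem stmt0_general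
    (V : Type*) [AddCommGroup V] [Module ℝ V]
    (g : V →ₗ[ℝ] V →ₗ[ℝ] ℝ)
    (J : V →ₗ[ℝ] V)
    (hJ2 : ∀ x : V, J (J x) = -x)
    (N : V →ₗ[ℝ] V →ₗ[ℝ] V)
    (F : V → V → V → ℝ)
    (hF : ∀ x y z : V, F x y z = g (N x y) z)
    (hFsym : ∀ x y z : V, F x y z = F x z y)
    (hFJ : ∀ x y z : V, F x y z = F x (J y) (J z))
    (hQK : ∀ x y z : V, F x y z + F y z x + F z x y = 0)
    (Q : V → V → V)
    (hQ : ∀ x y : V, Q x y = (1/4 : ℝ) • (N x (J y) - N (J x) y - (2 : ℝ) • N y (J x)))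
    :
    ∀ y z w : V, g (Q y z) w = -(1/4 : ℝ) * (F y z (J w) + F z w (J y) + F w y (J z)) := by
  intro y z w
  have hneg : ∀ x y z, F x y (-z) = -F x y z := fun x y z => by rw [hF, hF, map_neg]
  have hQF : g (Q y z) w = (1/4 : ℝ) * (F y (J z) w - F (J y) z w - 2 * F z (J y) w) := by
    simp only [hQ, hF, map_sub, map_smul, LinearMap.sub_apply, LinearMap.smul_apply, smul_eq_mul]
  rw [hQF, NordenTensor.combination_eq_neg_cyclic_sum hJ2 hFsym hFJ hneg hQK]
  ring

theorem stmt0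
    (V : Type*) [AddCommGroup V] [Module ℝ V] [FiniteDimensional ℝ V]
    (g : V →ₗ[ℝ] V →ₗ[ℝ] ℝ)
    (hgsymm : ∀ x y : V, g x y = g y x)
    (hgnd : ∀ x : V, (∀ y : V, g x y = 0) → x = 0)
    (J : V →ₗ[ℝ] V)
    (hJ2 : ∀ x : V, J (J x) = -x)
    (hJg : ∀ x y : V, g (J x) (J y) = -(g x y))
    (N : V →ₗ[ℝ] V →ₗ[ℝ] V)
    (F : V → V → V → ℝ)
    (hF : ∀ x y z : V, F x y z = g (N x y) z)
    (hFsym : ∀ x y z : V, F x y z = F x z y)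
    (hFJ : ∀ x y z : V, F x y z = F x (J y) (J z))
    (hQK : ∀ x y z : V, F x y z + F y z x + F z x y = 0)
    (Q : V → V → V)
    (hQ : ∀ x y : V, Q x y = (1/4 : ℝ) • (N x (J y) - N (J x) y - (2 : ℝ) • N y (J x)))
    :
    ∀ y z w : V, g (Q y z) w = -(1/4 : ℝ) * (F y z (J w) + F z w (J y) + F w y (J z)) :=
  stmt0_general V g J hJ2 N F hF hFsym hFJ hQK Q hQ
end

section
/- The trilinear form (y,z,w) ↦ g(Q(y,z),w) is totally skew-symmetric, i.e., it changes sign under the interchange of any two of its arguments. -/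
/-! With `F(x,y,z) = g(N(x,y),z)`, the form `g(Q(x,y),z)` is a combination of values of `F`.
Antisymmetry in the first two arguments comes from the cyclic condition applied to
`(x, Jy, z)` and `(Jx, y, z)`, antisymmetry in the last two from the cyclic condition applied to
`(Jx, y, z)`; both also use `F(x,Jy,z) = -F(x,y,Jz)`, which is `F(x,y,z) = F(x,Jy,Jz)` together
with `J² = -1`. The remaining transposition is a composite of these two. -/

structure IsQuasiKahlerNordenForm {R V : Type*} [CommRing R] [AddCommGroup V] [Module R V]
    (F : V →ₗ[R] V →ₗ[R] V →ₗ[R] R) (J : V →ₗ[R] V) : Prop where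
  symm : ∀ x y z, F x y z = F x z y
  apply_J_J : ∀ x y z, F x y z = F x (J y) (J z)
  cyclic : ∀ x y z, F x y z + F y z x + F z x y = 0

namespace IsQuasiKahlerNordenForm

variable {R V : Type*} [CommRing R] [AddCommGroup V] [Module R V]
  {F : V →ₗ[R] V →ₗ[R] V →ₗ[R] R} {J : V →ₗ[R] V}

/-- `4 g(Q(x,y),z)`, written through `F(x,y,z) = g(N(x,y),z)`. -/
def qForm (F : V →ₗ[R] V →ₗ[R] V →ₗ[R] R) (J : V →ₗ[R] V) (x y z : V) : R :=
  F x (J y) z - F (J x) y z - 2 * F y (J x) z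

theorem apply_J_eq_neg_apply_J (hF : IsQuasiKahlerNordenForm F J) (hJ2 : ∀ x, J (J x) = -x)
    (x y z : V) : F x (J y) z = -F x y (J z) := by
  rw [hF.apply_J_J x (J y) z, hJ2, map_neg, LinearMap.neg_apply]

theorem qForm_swap_left (hF : IsQuasiKahlerNordenForm F J) (hJ2 : ∀ x, J (J x) = -x)
    (x y z : V) : qForm F J x y z = -qForm F J y x z := by
  unfold qForm
  linear_combination -hF.cyclic x (J y) z - hF.cyclic (J x) y z + hF.symm (J y) z x
    + hF.symm y z (J x) + hF.apply_J_eq_neg_apply_J hJ2 z x y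

theorem qForm_swap_right (hF : IsQuasiKahlerNordenForm F J) (hJ2 : ∀ x, J (J x) = -x)
    (x y z : V) : qForm F J x y z = -qForm F J x z y := by
  unfold qForm
  linear_combination -2 * hF.cyclic (J x) y z + 2 * hF.symm y z (J x) - hF.symm (J x) z y
    + hF.symm x (J z) y + hF.apply_J_eq_neg_apply_J hJ2 x y z

theorem qForm_swap_outer (hF : IsQuasiKahlerNordenForm F J) (hJ2 : ∀ x, J (J x) = -x)
    (x y z : V) : qForm F J x y z = -qForm F J z y x := by
  rw [hF.qForm_swap_right hJ2, hF.qForm_swap_left hJ2, hF.qForm_swap_right hJ2, neg_neg]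

end IsQuasiKahlerNordenForm

open IsQuasiKahlerNordenForm in
theorem stmt1_general
    (V : Type*) [AddCommGroup V] [Module ℝ V]
    (g : V →ₗ[ℝ] V →ₗ[ℝ] ℝ)
    (J : V →ₗ[ℝ] V)
    (hJ2 : ∀ x : V, J (J x) = -x)
    (N : V →ₗ[ℝ] V →ₗ[ℝ] V)
    (F : V → V → V → ℝ)
    (hF : ∀ x y z : V, F x y z = g (N x y) z)
    (hFsym : ∀ x y z : V, F x y z = F x z y)
    (hFJ : ∀ x y z : V, F x y z = F x (J y) (J z))
    (hQK : ∀ x y z : V, F x y z + F y z x + F z x y = 0)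
    (Q : V → V → V)
    (hQ : ∀ x y : V, Q x y = (1/4 : ℝ) • (N x (J y) - N (J x) y - (2 : ℝ) • N y (J x)))
    :
    ∀ y z w : V,
      g (Q y z) w = -(g (Q z y) w) ∧
      g (Q y z) w = -(g (Q y w) z) ∧
      g (Q y z) w = -(g (Q w z) y) := by
  have hF' : ∀ x y z, F x y z = N.compr₂ g x y z := hF
  have hqk : IsQuasiKahlerNordenForm (N.compr₂ g) J :=
    ⟨by simpa only [hF'] using hFsym, by simpa only [hF'] using hFJ,
      by simpa only [hF'] using hQK⟩
  have hgQ : ∀ x y z, g (Q x y) z = (1/4 : ℝ) * qForm (N.compr₂ g) J x y z := by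
    intro x y z
    simp [hQ, qForm]
  intro y z w
  simp only [hgQ]
  refine ⟨?_, ?_, ?_⟩
  · rw [hqk.qForm_swap_left hJ2 y z w]; ring
  · rw [hqk.qForm_swap_right hJ2 y z w]; ring
  · rw [hqk.qForm_swap_outer hJ2 y z w]; ring

theorem stmt1
    (V : Type*) [AddCommGroup V] [Module ℝ V] [FiniteDimensional ℝ V]
    (g : V →ₗ[ℝ] V →ₗ[ℝ] ℝ)
    (hgsymm : ∀ x y : V, g x y = g y x)
    (hgnd : ∀ x : V, (∀ y : V, g x y = 0) → x = 0)
    (J : V →ₗ[ℝ] V)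
    (hJ2 : ∀ x : V, J (J x) = -x)
    (hJg : ∀ x y : V, g (J x) (J y) = -(g x y))
    (N : V →ₗ[ℝ] V →ₗ[ℝ] V)
    (F : V → V → V → ℝ)
    (hF : ∀ x y z : V, F x y z = g (N x y) z)
    (hFsym : ∀ x y z : V, F x y z = F x z y)
    (hFJ : ∀ x y z : V, F x y z = F x (J y) (J z))
    (hQK : ∀ x y z : V, F x y z + F y z x + F z x y = 0)
    (Q : V → V → V)
    (hQ : ∀ x y : V, Q x y = (1/4 : ℝ) • (N x (J y) - N (J x) y - (2 : ℝ) • N y (J x)))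
    :
    ∀ y z w : V,
      g (Q y z) w = -(g (Q z y) w) ∧
      g (Q y z) w = -(g (Q y w) z) ∧
      g (Q y z) w = -(g (Q w z) y) :=
  stmt1_general V g J hJ2 N F hF hFsym hFJ hQK Q hQ
end

section
/- For every z in V one has Σ_{i,j} g^{ij} F(e_i,e_j,z) = 0 and Σ_{i,j} g^{ij} F(e_i,Je_j,z) = 0, and consequently Σ_{i,j} g^{ij} Q(e_i,e_j) = 0 in V. -/
/-!
Contracting with `g^{ij}` is the `g`-trace. As `J` is an anti-isometry with `J² = -1`, the trace
of `B(J·, J·)` is minus the trace of `B`, and the trace of an antisymmetric form vanishes. The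
`J`-invariance of `F` in its last two slots thus kills the trace over those slots; summing the
cyclic identity over a dual pair of bases then leaves twice the trace over the first two slots.
The `J`-twisted traces are handled in the same way, and the trace of `Q` is a combination of them.
-/

open Matrix

/-- `∑ i j, M i j * B (e i) (e j)`: with `M` the inverse Gram matrix of a metric in the basis `e`,
this is the trace of `B` with respect to that metric. -/
noncomputable def metricTrace {ι V : Type*} [Fintype ι] [AddCommGroup V] [Module ℝ V]
    (M : Matrix ι ι ℝ) (e : Module.Basis ι ℝ V) (B : V → V → ℝ) : ℝ :=
  ∑ i, ∑ j, M i j * B (e i) (e j)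

section metricTrace

variable {ι V : Type*} [Fintype ι] [AddCommGroup V] [Module ℝ V]
  {M : Matrix ι ι ℝ} {e : Module.Basis ι ℝ V}

theorem metricTrace_add (B B' : V → V → ℝ) :
    metricTrace M e (fun x y => B x y + B' x y) = metricTrace M e B + metricTrace M e B' := by
  simp only [metricTrace, mul_add, Finset.sum_add_distrib]

theorem metricTrace_sub (B B' : V → V → ℝ) :
    metricTrace M e (fun x y => B x y - B' x y) = metricTrace M e B - metricTrace M e B' := by
  simp only [metricTrace, mul_sub, Finset.sum_sub_distrib]

theorem metricTrace_const_mul (c : ℝ) (B : V → V → ℝ) :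
    metricTrace M e (fun x y => c * B x y) = c * metricTrace M e B := by
  simp only [metricTrace, Finset.mul_sum]
  exact Finset.sum_congr rfl fun _ _ => Finset.sum_congr rfl fun _ _ => by ring

theorem metricTrace_zero : metricTrace M e (fun _ _ => 0) = 0 := by
  simp [metricTrace]

theorem metricTrace_flip (hM : M.IsSymm) (B : V → V → ℝ) :
    metricTrace M e (fun x y => B y x) = metricTrace M e B := by
  rw [metricTrace, Finset.sum_comm]
  exact Finset.sum_congr rfl fun i _ => Finset.sum_congr rfl fun j _ => by
    rw [← hM.apply i j]

theorem metricTrace_eq_zero_of_antisymm (hM : M.IsSymm) {B : V → V → ℝ}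
    (hB : ∀ x y, B x y = -B y x) : metricTrace M e B = 0 := by
  have h : metricTrace M e B = -metricTrace M e B :=
    calc metricTrace M e B = metricTrace M e (fun x y => -1 * B y x) :=
          congrArg _ (funext₂ fun x y => by rw [hB]; ring)
      _ = -metricTrace M e B := by rw [metricTrace_const_mul, metricTrace_flip hM]; ring
  linarith

variable [DecidableEq ι]

theorem metricTrace_eq_trace (B : V →ₗ[ℝ] V →ₗ[ℝ] ℝ) :
    metricTrace M e (fun x y => B x y) = trace (M * (LinearMap.toMatrix₂ e e B)ᵀ) := by
  simp [metricTrace, trace, Matrix.mul_apply, LinearMap.toMatrix₂_apply]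

theorem metricTrace_comp_eq_neg {J : V →ₗ[ℝ] V}
    (hMJ : LinearMap.toMatrix e e J * M * (LinearMap.toMatrix e e J)ᵀ = -M)
    (B : V →ₗ[ℝ] V →ₗ[ℝ] ℝ) :
    metricTrace M e (fun x y => B (J x) (J y)) = -metricTrace M e (fun x y => B x y) := by
  have h := metricTrace_eq_trace (M := M) (e := e) (B.compl₁₂ J J)
  simp only [LinearMap.compl₁₂_apply] at h
  rw [h, metricTrace_eq_trace, LinearMap.toMatrix₂_compl₁₂ (b₁ := e) (b₂ := e), transpose_mul,
    transpose_mul, transpose_transpose, ← Matrix.mul_assoc, ← Matrix.mul_assoc, trace_mul_comm,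
    ← Matrix.mul_assoc, ← Matrix.mul_assoc, hMJ, Matrix.neg_mul, trace_neg]

end metricTrace

/-- An anti-isometry `A` of `G` with `A² = -1` satisfies `Aᵀ G = G A`, so it is also an
anti-isometry of `M = G⁻¹`. -/
theorem Matrix.mul_mul_transpose_eq_neg {n R : Type*} [Fintype n] [DecidableEq n] [CommRing R]
    {A G M : Matrix n n R} (hMG : M * G = 1) (hGM : G * M = 1) (hA : A * A = -1)
    (hAGA : Aᵀ * G * A = -G) : A * M * Aᵀ = -M := by
  have hAG : Aᵀ * G = G * A :=
    calc Aᵀ * G = Aᵀ * G * (A * -A) := by rw [Matrix.mul_neg, hA, neg_neg, Matrix.mul_one]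
      _ = G * A := by rw [← Matrix.mul_assoc, hAGA, Matrix.neg_mul, Matrix.mul_neg, neg_neg]
  calc A * M * Aᵀ = A * M * (Aᵀ * G) * M := by
        rw [Matrix.mul_assoc _ _ M, Matrix.mul_assoc _ G M, hGM, Matrix.mul_one, Matrix.mul_assoc]
    _ = A * (M * G) * A * M := by rw [hAG]; simp only [Matrix.mul_assoc]
    _ = -M := by rw [hMG, Matrix.mul_one, hA, Matrix.neg_mul, Matrix.one_mul]

section NordenMetric

variable {ι V : Type*} [Fintype ι] [DecidableEq ι] [AddCommGroup V] [Module ℝ V]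
  {g : V →ₗ[ℝ] V →ₗ[ℝ] ℝ} {M : Matrix ι ι ℝ} {e : Module.Basis ι ℝ V}

theorem isSymm_of_mul_toMatrix₂_eq_one (hg : ∀ x y, g x y = g y x)
    (hMG : M * LinearMap.toMatrix₂ e e g = 1) : M.IsSymm := by
  rw [← Matrix.inv_eq_left_inv hMG]
  exact IsSymm.inv (IsSymm.ext fun i j => by simp [hg])

theorem toMatrix_mul_mul_transpose_eq_neg {J : V →ₗ[ℝ] V} (hJ2 : ∀ x, J (J x) = -x)
    (hJg : ∀ x y, g (J x) (J y) = -g x y) (hMG : M * LinearMap.toMatrix₂ e e g = 1) :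
    LinearMap.toMatrix e e J * M * (LinearMap.toMatrix e e J)ᵀ = -M := by
  have hA2 : LinearMap.toMatrix e e J * LinearMap.toMatrix e e J = -1 := by
    rw [← LinearMap.toMatrix_mul, ← LinearMap.toMatrix_one e, ← map_neg]
    exact congrArg _ (LinearMap.ext hJ2)
  have hAGA : (LinearMap.toMatrix e e J)ᵀ * LinearMap.toMatrix₂ e e g * LinearMap.toMatrix e e J
      = -LinearMap.toMatrix₂ e e g := by
    rw [← LinearMap.toMatrix₂_compl₁₂, ← map_neg]
    exact congrArg _ (LinearMap.ext₂ hJg)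
  exact Matrix.mul_mul_transpose_eq_neg hMG (mul_eq_one_comm.mp hMG) hA2 hAGA

end NordenMetric

namespace QuasiKahler

variable {ι V : Type*} [Fintype ι] [AddCommGroup V] [Module ℝ V]
  {M : Matrix ι ι ℝ} {e : Module.Basis ι ℝ V} {J : V →ₗ[ℝ] V} {F : V →ₗ[ℝ] V →ₗ[ℝ] V →ₗ[ℝ] ℝ}

theorem trace₂₃_eq_zero [DecidableEq ι]
    (hMJ : LinearMap.toMatrix e e J * M * (LinearMap.toMatrix e e J)ᵀ = -M)
    (hFJ : ∀ x y z, F x y z = F x (J y) (J z)) (z : V) :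
    metricTrace M e (fun x y => F z x y) = 0 := by
  have h := metricTrace_comp_eq_neg hMJ (F z)
  simp only [← hFJ z] at h
  linarith

theorem trace₁₂_eq_zero [DecidableEq ι] (hM : M.IsSymm)
    (hMJ : LinearMap.toMatrix e e J * M * (LinearMap.toMatrix e e J)ᵀ = -M)
    (hFsym : ∀ x y z, F x y z = F x z y) (hFJ : ∀ x y z, F x y z = F x (J y) (J z))
    (hQK : ∀ x y z, F x y z + F y z x + F z x y = 0) (z : V) :
    metricTrace M e (fun x y => F x y z) = 0 := by
  have hcyc := congrArg (metricTrace M e) (funext₂ fun x y => hQK x y z)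
  have hmid : metricTrace M e (fun x y => F y z x) = metricTrace M e (fun x y => F x y z) := by
    rw [← metricTrace_flip hM (fun x y => F x y z)]
    exact congrArg _ (funext₂ fun x y => hFsym y z x)
  rw [metricTrace_add, metricTrace_add, hmid, trace₂₃_eq_zero hMJ hFJ, metricTrace_zero] at hcyc
  linarith

theorem trace₁₂_comp_left_eq_zero [DecidableEq ι] (hM : M.IsSymm)
    (hMJ : LinearMap.toMatrix e e J * M * (LinearMap.toMatrix e e J)ᵀ = -M)
    (hFsym : ∀ x y z, F x y z = F x z y) (hFJ : ∀ x y z, F x y z = F x (J y) (J z))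
    (hQK : ∀ x y z, F x y z + F y z x + F z x y = 0) (z : V) :
    metricTrace M e (fun x y => F (J x) y z) = 0 := by
  have h := metricTrace_comp_eq_neg hMJ (F.compr₂ (LinearMap.applyₗ (J z)))
  simp only [LinearMap.compr₂_apply, LinearMap.applyₗ_apply_apply, ← hFJ] at h
  rw [h, trace₁₂_eq_zero hM hMJ hFsym hFJ hQK, neg_zero]

theorem trace₂₃_comp_left_eq_zero (hM : M.IsSymm) (hJ2 : ∀ x, J (J x) = -x)
    (hFsym : ∀ x y z, F x y z = F x z y) (hFJ : ∀ x y z, F x y z = F x (J y) (J z)) (z : V) :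
    metricTrace M e (fun x y => F z (J x) y) = 0 :=
  metricTrace_eq_zero_of_antisymm hM fun x y => by rw [hFsym, hFJ z y, hJ2, map_neg]

theorem trace₁₂_comp_right_eq_zero [DecidableEq ι] (hM : M.IsSymm) (hJ2 : ∀ x, J (J x) = -x)
    (hMJ : LinearMap.toMatrix e e J * M * (LinearMap.toMatrix e e J)ᵀ = -M)
    (hFsym : ∀ x y z, F x y z = F x z y) (hFJ : ∀ x y z, F x y z = F x (J y) (J z))
    (hQK : ∀ x y z, F x y z + F y z x + F z x y = 0) (z : V) :
    metricTrace M e (fun x y => F x (J y) z) = 0 := by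
  have hcyc := congrArg (metricTrace M e) (funext₂ fun x y => hQK x (J y) z)
  have hmid : metricTrace M e (fun x y => F (J y) z x) = 0 := by
    rw [← trace₁₂_comp_left_eq_zero hM hMJ hFsym hFJ hQK z,
      ← metricTrace_flip hM (fun x y => F (J x) y z)]
    exact congrArg _ (funext₂ fun x y => hFsym (J y) z x)
  have hlast : metricTrace M e (fun x y => F z x (J y)) = 0 := by
    rw [← trace₂₃_comp_left_eq_zero hM hJ2 hFsym hFJ z,
      ← metricTrace_flip hM (fun x y => F z (J x) y)]
    exact congrArg _ (funext₂ fun x y => hFsym z x (J y))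
  rw [metricTrace_add, metricTrace_add, hmid, hlast, metricTrace_zero] at hcyc
  linarith

end QuasiKahler

open QuasiKahler in
theorem stmt2_general
    (V : Type*) [AddCommGroup V] [Module ℝ V]
    (g : V →ₗ[ℝ] V →ₗ[ℝ] ℝ)
    (hgsymm : ∀ x y : V, g x y = g y x)
    (hgnd : ∀ x : V, (∀ y : V, g x y = 0) → x = 0)
    (J : V →ₗ[ℝ] V)
    (hJ2 : ∀ x : V, J (J x) = -x)
    (hJg : ∀ x y : V, g (J x) (J y) = -(g x y))
    (N : V →ₗ[ℝ] V →ₗ[ℝ] V)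
    (F : V → V → V → ℝ)
    (hF : ∀ x y z : V, F x y z = g (N x y) z)
    (hFsym : ∀ x y z : V, F x y z = F x z y)
    (hFJ : ∀ x y z : V, F x y z = F x (J y) (J z))
    (hQK : ∀ x y z : V, F x y z + F y z x + F z x y = 0)
    (Q : V → V → V)
    (hQ : ∀ x y : V, Q x y = (1/4 : ℝ) • (N x (J y) - N (J x) y - (2 : ℝ) • N y (J x)))
    {ι : Type*} [Fintype ι] [DecidableEq ι]
    (e : Module.Basis ι ℝ V)
    (ginv : ι → ι → ℝ)
    (hginv : ∀ i j : ι, (∑ k, ginv i k * g (e k) (e j)) = if i = j then (1:ℝ) else 0)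
    :
    ∀ z : V,
      (∑ i, ∑ j, ginv i j * F (e i) (e j) z) = 0 ∧
      (∑ i, ∑ j, ginv i j * F (e i) (J (e j)) z) = 0 ∧
      (∑ i, ∑ j, ginv i j • Q (e i) (e j)) = (0 : V) := by
  have hMG : Matrix.of ginv * LinearMap.toMatrix₂ e e g = 1 := by
    ext i j
    simp [Matrix.mul_apply, hginv, Matrix.one_apply]
  have hM := isSymm_of_mul_toMatrix₂_eq_one hgsymm hMG
  have hMJ := toMatrix_mul_mul_transpose_eq_neg hJ2 hJg hMG
  obtain rfl : F = fun x y z => N.compr₂ g x y z := funext₃ hF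
  intro z
  refine ⟨trace₁₂_eq_zero hM hMJ hFsym hFJ hQK z,
    trace₁₂_comp_right_eq_zero hM hJ2 hMJ hFsym hFJ hQK z, hgnd _ fun y => ?_⟩
  have hflip : metricTrace (Matrix.of ginv) e (fun a b => N.compr₂ g b (J a) y) = 0 :=
    (metricTrace_flip hM (fun a b => N.compr₂ g a (J b) y)).trans
      (trace₁₂_comp_right_eq_zero hM hJ2 hMJ hFsym hFJ hQK y)
  calc g (∑ i, ∑ j, ginv i j • Q (e i) (e j)) y
      = metricTrace (Matrix.of ginv) e (fun a b => (1/4 : ℝ) * N.compr₂ g a (J b) y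
          - (1/4 : ℝ) * N.compr₂ g (J a) b y - (1/2 : ℝ) * N.compr₂ g b (J a) y) := by
        simp only [metricTrace, map_sum, map_smul, LinearMap.sum_apply, LinearMap.smul_apply, hQ,
          map_sub, LinearMap.sub_apply, LinearMap.compr₂_apply, smul_eq_mul, Matrix.of_apply]
        exact Finset.sum_congr rfl fun i _ => Finset.sum_congr rfl fun j _ => by ring
    _ = 0 := by
      rw [metricTrace_sub, metricTrace_sub, metricTrace_const_mul, metricTrace_const_mul,
        metricTrace_const_mul, hflip, trace₁₂_comp_right_eq_zero hM hJ2 hMJ hFsym hFJ hQK y,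
        trace₁₂_comp_left_eq_zero hM hMJ hFsym hFJ hQK y]
      ring

theorem stmt2
    (V : Type*) [AddCommGroup V] [Module ℝ V] [FiniteDimensional ℝ V]
    (g : V →ₗ[ℝ] V →ₗ[ℝ] ℝ)
    (hgsymm : ∀ x y : V, g x y = g y x)
    (hgnd : ∀ x : V, (∀ y : V, g x y = 0) → x = 0)
    (J : V →ₗ[ℝ] V)
    (hJ2 : ∀ x : V, J (J x) = -x)
    (hJg : ∀ x y : V, g (J x) (J y) = -(g x y))
    (N : V →ₗ[ℝ] V →ₗ[ℝ] V)
    (F : V → V → V → ℝ)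
    (hF : ∀ x y z : V, F x y z = g (N x y) z)
    (hFsym : ∀ x y z : V, F x y z = F x z y)
    (hFJ : ∀ x y z : V, F x y z = F x (J y) (J z))
    (hQK : ∀ x y z : V, F x y z + F y z x + F z x y = 0)
    (Q : V → V → V)
    (hQ : ∀ x y : V, Q x y = (1/4 : ℝ) • (N x (J y) - N (J x) y - (2 : ℝ) • N y (J x)))
    {ι : Type*} [Fintype ι] [DecidableEq ι]
    (e : Module.Basis ι ℝ V)
    (ginv : ι → ι → ℝ)
    (hginv : ∀ i j : ι, (∑ k, ginv i k * g (e k) (e j)) = if i = j then (1:ℝ) else 0)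
    :
    ∀ z : V,
      (∑ i, ∑ j, ginv i j * F (e i) (e j) z) = 0 ∧
      (∑ i, ∑ j, ginv i j * F (e i) (J (e j)) z) = 0 ∧
      (∑ i, ∑ j, ginv i j • Q (e i) (e j)) = (0 : V) :=
  stmt2_general V g hgsymm hgnd J hJ2 hJg N F hF hFsym hFJ hQK Q hQ e ginv hginv
end

section
/- One has ‖∇J‖² = −2 Σ g^{ij} g^{ks} g(N(e_i,e_k), N(e_s,e_j)), where the sum is over all indices i,j,k,s. -/
/-!
Write `e^i := ∑ j, g^{ij} e_j` for the dual basis. Both sides are full contractions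
`∑ F(e_i, e_k, e_c) F(e^i, e^k, e^c)` and `∑ F(e_i, e_k, e_c) F(e^k, e^i, e^c)`. Since `F` is symmetric
in its last two arguments, the quasi-Kähler condition reads `F(x, y, z) = -F(y, x, z) - F(z, y, x)`;
inserting this into the second factor of the first contraction, the two resulting terms agree after
renaming `k ↔ c`, which gives the factor `-2`.
-/

open Finset

theorem sum_mul_eq_neg_two_mul_sum_mul_swap {V ι : Type*} [Fintype ι] (T : V → V → V → ℝ)
    (hsymm : ∀ x y z, T x y z = T x z y) (hcyc : ∀ x y z, T x y z + T y z x + T z x y = 0)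
    (a b : ι → V) :
    ∑ i, ∑ k, ∑ c, T (a i) (a k) (a c) * T (b i) (b k) (b c)
      = -2 * ∑ i, ∑ k, ∑ c, T (a i) (a k) (a c) * T (b k) (b i) (b c) := by
  have hT : ∀ x y z, T x y z = -T y x z - T z y x := fun x y z => by
    linarith [hcyc x y z, hsymm y z x, hsymm z x y]
  have hrename : ∑ i, ∑ k, ∑ c, T (a i) (a k) (a c) * T (b c) (b k) (b i)
      = ∑ i, ∑ k, ∑ c, T (a i) (a k) (a c) * T (b k) (b i) (b c) := by
    refine sum_congr rfl fun i _ => ?_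
    rw [sum_comm]
    exact sum_congr rfl fun k _ => sum_congr rfl fun c _ => by
      rw [hsymm (a i), hsymm (b k)]
  calc ∑ i, ∑ k, ∑ c, T (a i) (a k) (a c) * T (b i) (b k) (b c)
      = ∑ i, ∑ k, ∑ c, T (a i) (a k) (a c) * (-T (b k) (b i) (b c) - T (b c) (b k) (b i)) :=
        sum_congr rfl fun i _ => sum_congr rfl fun k _ => sum_congr rfl fun c _ => by rw [← hT]
    _ = -∑ i, ∑ k, ∑ c, T (a i) (a k) (a c) * T (b k) (b i) (b c)
          - ∑ i, ∑ k, ∑ c, T (a i) (a k) (a c) * T (b c) (b k) (b i) := by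
        simp only [mul_sub, mul_neg, sum_sub_distrib, sum_neg_distrib]
    _ = _ := by rw [hrename]; ring

section RaiseIndex

variable {V ι : Type*} [AddCommGroup V] [Module ℝ V] [Fintype ι]
  (e : Module.Basis ι ℝ V) (ginv : ι → ι → ℝ)

noncomputable def raiseIndex (i : ι) : V := ∑ j, ginv i j • e j

theorem sum_sum_mul_mul_apply_eq_apply_raiseIndex (B : V →ₗ[ℝ] V →ₗ[ℝ] ℝ) (x y : ι) :
    ∑ j, ∑ s, ginv x j * ginv y s * B (e j) (e s)
      = B (raiseIndex e ginv x) (raiseIndex e ginv y) := by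
  simp only [raiseIndex, map_sum, map_smul, LinearMap.sum_apply, LinearMap.smul_apply,
    smul_eq_mul, mul_sum]
  rw [sum_comm]
  exact sum_congr rfl fun j _ => sum_congr rfl fun s _ => by ring

variable [DecidableEq ι] {g : V →ₗ[ℝ] V →ₗ[ℝ] ℝ} {e ginv}

theorem apply_raiseIndex (hgsymm : ∀ x y : V, g x y = g y x)
    (hginv : ∀ i j : ι, (∑ k, ginv i k * g (e k) (e j)) = if i = j then (1:ℝ) else 0)
    (v : V) (c : ι) : g v (raiseIndex e ginv c) = e.repr v c := by
  suffices g.flip (raiseIndex e ginv c) = e.coord c from LinearMap.congr_fun this v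
  refine e.ext fun a => ?_
  simp only [raiseIndex, map_sum, map_smul, LinearMap.sum_apply, LinearMap.smul_apply,
    LinearMap.flip_apply, smul_eq_mul, Module.Basis.coord_apply, Module.Basis.repr_self,
    Finsupp.single_apply, @eq_comm _ a c]
  rw [← hginv c a]
  exact sum_congr rfl fun j _ => by rw [hgsymm]

theorem apply_eq_sum_mul_apply_raiseIndex (hgsymm : ∀ x y : V, g x y = g y x)
    (hginv : ∀ i j : ι, (∑ k, ginv i k * g (e k) (e j)) = if i = j then (1:ℝ) else 0)
    (u v : V) : g u v = ∑ c, g u (e c) * g v (raiseIndex e ginv c) := by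
  simp only [apply_raiseIndex hgsymm hginv]
  conv_lhs => rw [← e.sum_repr v]
  simp only [map_sum, map_smul, smul_eq_mul, mul_comm]

theorem sum_sum_mul_mul_apply_eq_sum_mul_apply_raiseIndex (hgsymm : ∀ x y : V, g x y = g y x)
    (hginv : ∀ i j : ι, (∑ k, ginv i k * g (e k) (e j)) = if i = j then (1:ℝ) else 0)
    (B : V →ₗ[ℝ] V →ₗ[ℝ] V) (u : V) (x y : ι) :
    ∑ j, ∑ s, ginv x j * ginv y s * g u (B (e j) (e s))
      = ∑ c, g u (e c) * g (B (raiseIndex e ginv x) (raiseIndex e ginv y)) (raiseIndex e ginv c) :=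
  (sum_sum_mul_mul_apply_eq_apply_raiseIndex e ginv (B.compr₂ (g u)) x y).trans
    (apply_eq_sum_mul_apply_raiseIndex hgsymm hginv _ _)

end RaiseIndex

theorem stmt3_general
    (V : Type*) [AddCommGroup V] [Module ℝ V]
    (g : V →ₗ[ℝ] V →ₗ[ℝ] ℝ)
    (hgsymm : ∀ x y : V, g x y = g y x)
    (N : V →ₗ[ℝ] V →ₗ[ℝ] V)
    (F : V → V → V → ℝ)
    (hF : ∀ x y z : V, F x y z = g (N x y) z)
    (hFsym : ∀ x y z : V, F x y z = F x z y)
    (hQK : ∀ x y z : V, F x y z + F y z x + F z x y = 0)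
    {ι : Type*} [Fintype ι] [DecidableEq ι]
    (e : Module.Basis ι ℝ V)
    (ginv : ι → ι → ℝ)
    (hginv : ∀ i j : ι, (∑ k, ginv i k * g (e k) (e j)) = if i = j then (1:ℝ) else 0)
    :
    (∑ i, ∑ j, ∑ k, ∑ s, ginv i j * ginv k s * g (N (e i) (e k)) (N (e j) (e s)))
      = -2 * ∑ i, ∑ j, ∑ k, ∑ s, ginv i j * ginv k s * g (N (e i) (e k)) (N (e s) (e j)) := by
  set d := raiseIndex e ginv
  have contract := sum_sum_mul_mul_apply_eq_sum_mul_apply_raiseIndex hgsymm hginv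
  have lhs : (∑ i, ∑ j, ∑ k, ∑ s, ginv i j * ginv k s * g (N (e i) (e k)) (N (e j) (e s)))
      = ∑ i, ∑ k, ∑ c, F (e i) (e k) (e c) * F (d i) (d k) (d c) := by
    simp only [hF]
    exact sum_congr rfl fun i _ => sum_comm.trans (sum_congr rfl fun k _ => contract N _ i k)
  have rhs : (∑ i, ∑ j, ∑ k, ∑ s, ginv i j * ginv k s * g (N (e i) (e k)) (N (e s) (e j)))
      = ∑ i, ∑ k, ∑ c, F (e i) (e k) (e c) * F (d k) (d i) (d c) := by
    simp only [hF]
    exact sum_congr rfl fun i _ => sum_comm.trans (sum_congr rfl fun k _ => contract N.flip _ i k)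
  rw [lhs, rhs]
  exact sum_mul_eq_neg_two_mul_sum_mul_swap F hFsym hQK e d

theorem stmt3
    (V : Type*) [AddCommGroup V] [Module ℝ V] [FiniteDimensional ℝ V]
    (g : V →ₗ[ℝ] V →ₗ[ℝ] ℝ)
    (hgsymm : ∀ x y : V, g x y = g y x)
    (hgnd : ∀ x : V, (∀ y : V, g x y = 0) → x = 0)
    (J : V →ₗ[ℝ] V)
    (hJ2 : ∀ x : V, J (J x) = -x)
    (hJg : ∀ x y : V, g (J x) (J y) = -(g x y))
    (N : V →ₗ[ℝ] V →ₗ[ℝ] V)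
    (F : V → V → V → ℝ)
    (hF : ∀ x y z : V, F x y z = g (N x y) z)
    (hFsym : ∀ x y z : V, F x y z = F x z y)
    (hFJ : ∀ x y z : V, F x y z = F x (J y) (J z))
    (hQK : ∀ x y z : V, F x y z + F y z x + F z x y = 0)
    {ι : Type*} [Fintype ι] [DecidableEq ι]
    (e : Module.Basis ι ℝ V)
    (ginv : ι → ι → ℝ)
    (hginv : ∀ i j : ι, (∑ k, ginv i k * g (e k) (e j)) = if i = j then (1:ℝ) else 0)
    :
    (∑ i, ∑ j, ∑ k, ∑ s, ginv i j * ginv k s * g (N (e i) (e k)) (N (e j) (e s)))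
      = -2 * ∑ i, ∑ j, ∑ k, ∑ s, ginv i j * ginv k s * g (N (e i) (e k)) (N (e s) (e j)) :=
  stmt3_general V g hgsymm N F hF hFsym hQK e ginv hginv
end

section
/- The quadrilinear form P is curvature-like: P(x,y,z,w) = −P(y,x,z,w) = −P(x,y,w,z) for all x,y,z,w, and 𝔖_{x,y,z} P(x,y,z,w) = 0 for all x,y,z,w. -/
/-!
Nondegeneracy of `g` turns the skew-symmetry of `g (Q x y) z` in `x, y` into skew-symmetry of
`Q` itself. Each of the three identities is then a linear relation among the three products
`g (Q x y) (Q z w)`, `g (Q z y) (Q x w)`, `g (Q x z) (Q y w)`, once every factor is brought to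
this form by `Q b a = -Q a b` and, for the swap of `z` and `w`, by the symmetry of `g`.
-/

theorem LinearMap.SeparatingLeft.eq_neg_swap {R M N P ι : Type*} [CommRing R]
    [AddCommGroup M] [Module R M] [AddCommGroup N] [Module R N] [AddCommGroup P] [Module R P]
    {B : M →ₗ[R] N →ₗ[R] P} (hB : B.SeparatingLeft) {Q : ι → ι → M}
    (hQ : ∀ a b y, B (Q a b) y = -B (Q b a) y) (a b : ι) : Q b a = -Q a b :=
  eq_neg_of_add_eq_zero_left <| hB _ fun y => by
    rw [map_add, LinearMap.add_apply, hQ a b, add_neg_cancel]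

section CurvatureForm

variable {R M : Type*} [CommRing R] [AddCommGroup M] [Module R M]

def curvatureForm (g : M →ₗ[R] M →ₗ[R] R) (Q : M →ₗ[R] M →ₗ[R] M) (x y z w : M) : R :=
  2 * g (Q x y) (Q z w) + g (Q z y) (Q x w) + g (Q x z) (Q y w)

variable {g : M →ₗ[R] M →ₗ[R] R} {Q : M →ₗ[R] M →ₗ[R] M}

theorem curvatureForm_swap_left (hQ : ∀ a b, Q b a = -Q a b) (x y z w : M) :
    curvatureForm g Q x y z w = -curvatureForm g Q y x z w := by
  simp only [curvatureForm, hQ x y, hQ x z, hQ z y, map_neg, LinearMap.neg_apply]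
  ring

theorem curvatureForm_swap_right (hg : ∀ u v, g u v = g v u) (hQ : ∀ a b, Q b a = -Q a b)
    (x y z w : M) : curvatureForm g Q x y z w = -curvatureForm g Q x y w z := by
  simp only [curvatureForm, hQ z w, hQ y w, hQ z y, map_neg, LinearMap.neg_apply]
  linear_combination -hg (Q y w) (Q x z) - hg (Q x w) (Q z y)

theorem curvatureForm_cyclic (hQ : ∀ a b, Q b a = -Q a b) (x y z w : M) :
    curvatureForm g Q x y z w + curvatureForm g Q y z x w + curvatureForm g Q z x y w = 0 := by
  simp only [curvatureForm, hQ x y, hQ x z, hQ z y, map_neg, LinearMap.neg_apply]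
  ring

end CurvatureForm

theorem stmt6_general
    (V : Type*) [AddCommGroup V] [Module ℝ V]
    (g : V →ₗ[ℝ] V →ₗ[ℝ] ℝ)
    (hgsymm : ∀ x y : V, g x y = g y x)
    (hgnd : ∀ x : V, (∀ y : V, g x y = 0) → x = 0)
    (Q : V →ₗ[ℝ] V →ₗ[ℝ] V)
    (hQskew1 : ∀ x y z : V, g (Q x y) z = -(g (Q y x) z))
    (P : V → V → V → V → ℝ)
    (hP : ∀ x y z w : V, P x y z w =
      2 * g (Q x y) (Q z w) + g (Q z y) (Q x w) + g (Q x z) (Q y w))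
    :
    ∀ x y z w : V,
      P x y z w = -(P y x z w) ∧
      P x y z w = -(P x y w z) ∧
      P x y z w + P y z x w + P z x y w = 0 := by
  have hQ : ∀ a b, Q b a = -Q a b :=
    LinearMap.SeparatingLeft.eq_neg_swap hgnd (Q := fun a b => Q a b) hQskew1
  obtain rfl : P = curvatureForm g Q := by
    funext x y z w
    exact hP x y z w
  intro x y z w
  exact ⟨curvatureForm_swap_left hQ x y z w, curvatureForm_swap_right hgsymm hQ x y z w,
    curvatureForm_cyclic hQ x y z w⟩

theorem stmt6
    (V : Type*) [AddCommGroup V] [Module ℝ V] [FiniteDimensional ℝ V]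
    (g : V →ₗ[ℝ] V →ₗ[ℝ] ℝ)
    (hgsymm : ∀ x y : V, g x y = g y x)
    (hgnd : ∀ x : V, (∀ y : V, g x y = 0) → x = 0)
    (Q : V →ₗ[ℝ] V →ₗ[ℝ] V)
    (hQskew1 : ∀ x y z : V, g (Q x y) z = -(g (Q y x) z))
    (hQskew2 : ∀ x y z : V, g (Q x y) z = -(g (Q x z) y))
    (P : V → V → V → V → ℝ)
    (hP : ∀ x y z w : V, P x y z w =
      2 * g (Q x y) (Q z w) + g (Q z y) (Q x w) + g (Q x z) (Q y w))
    :
    ∀ x y z w : V,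
      P x y z w = -(P y x z w) ∧
      P x y z w = -(P x y w z) ∧
      P x y z w + P y z x w + P z x y w = 0 :=
  stmt6_general V g hgsymm hgnd Q hQskew1 P hP
end

section
/- The quadrilinear form R' satisfies the first Bianchi identity 𝔖_{x,y,z} R'(x,y,z,w) = 0 for all x,y,z,w if and only if 3R'(x,y,z,w) = 3R(x,y,z,w) + 2g(Q(x,y),Q(z,w)) + g(Q(z,y),Q(x,w)) + g(Q(x,z),Q(y,w)) for all x,y,z,w in V. -/
/-!
Since `R` satisfies the Bianchi identity and `Q` is skew, the cyclic sum of `R'` over `x, y, z`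
is `2 (𝔖 S - 𝔖 q)` with `q(x,y,z,w) = g(Q(x,y),Q(z,w))`. The form `q` has the symmetries of a
curvature tensor except the Bianchi identity, so `Ω := 𝔖 q` is alternating. For `S` skew in its
last three arguments, `𝔖 S = Ω` forces `3 S = Ω`: the four instances of `𝔖 S = Ω` obtained by
choosing which argument sits in the last slot form a linear system in the four values of `S`
at `x, y, z, w` (up to sign). Conversely `3 (S(x,y,z,w) - S(y,x,z,w)) = 2 Ω(x,y,z,w)` gives back
`𝔖 S = Ω` by summing cyclically, and it is the formula for `3 R'` rewritten via the
definition of `R'`.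
-/

section CyclicSum

variable {α K : Type*}

def cyclicSum [Add K] (T : α → α → α → α → K) (x y z w : α) : K :=
  T x y z w + T y z x w + T z x y w

structure IsAlternating [Neg K] (Ω : α → α → α → α → K) : Prop where
  swap₁₂ : ∀ x y z w, Ω x y z w = -Ω y x z w
  swap₂₃ : ∀ x y z w, Ω x y z w = -Ω x z y w
  swap₃₄ : ∀ x y z w, Ω x y z w = -Ω x y w z

section CommRing

variable [CommRing K]

theorem IsAlternating.cyclicSum_eq {Ω : α → α → α → α → K} (hΩ : IsAlternating Ω)
    (x y z w : α) : cyclicSum Ω x y z w = 3 * Ω x y z w := by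
  unfold cyclicSum
  linear_combination hΩ.swap₂₃ y x z w + hΩ.swap₁₂ x z y w - hΩ.swap₁₂ x y z w
    - hΩ.swap₂₃ x y z w

theorem isAlternating_cyclicSum {T : α → α → α → α → K}
    (hT : ∀ x y z w, T x y z w = -T y x z w) (hT_symm : ∀ x y z w, T x y z w = T z w x y) :
    IsAlternating (cyclicSum T) where
  swap₁₂ x y z w := by
    unfold cyclicSum
    linear_combination hT y x z w + hT z y x w + hT x z y w
  swap₂₃ x y z w := by
    unfold cyclicSum
    linear_combination hT x z y w + hT z y x w + hT y x z w
  swap₃₄ x y z w := by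
    unfold cyclicSum
    linear_combination hT_symm x y w z + hT w z x y - hT_symm z w x y + hT_symm y w x z
      + hT x z y w + hT w x y z - hT_symm x w y z

theorem three_mul_eq_of_cyclicSum_eq {S Ω : α → α → α → α → K}
    (hS₂₃ : ∀ x y z w, S x y z w = -S x z y w) (hS₃₄ : ∀ x y z w, S x y z w = -S x y w z)
    (hΩ : IsAlternating Ω) (h : ∀ x y z w, cyclicSum S x y z w = Ω x y z w) (x y z w : α) :
    3 * S x y z w = Ω x y z w := by
  have h₁ := h x y z w
  have h₂ := h x y w z
  have h₃ := h x z w y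
  have h₄ := h y z w x
  unfold cyclicSum at h₁ h₂ h₃ h₄
  have e₁ : S x y z w - S y x z w + S z x y w = Ω x y z w := by
    linear_combination h₁ - hS₂₃ y x z w
  have e₂ : -S x y z w + S y x z w + S w x y z = -Ω x y z w := by
    linear_combination h₂ - hS₃₄ x y z w + hS₃₄ y x z w - hS₂₃ y x w z + hΩ.swap₃₄ x y z w
  have e₃ : S x y z w + S z x y w - S w x y z = Ω x y z w := by
    linear_combination h₃ + hS₂₃ x y z w - hS₃₄ x z y w + hS₃₄ z x y w - hS₂₃ z x w y
      - hS₃₄ w x y z + hΩ.swap₃₄ x z y w - hΩ.swap₂₃ x y z w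
  have e₄ : S y x z w - S z x y w + S w x y z = -Ω x y z w := by
    linear_combination h₄ + hS₂₃ y x z w - hS₃₄ y z x w - hS₃₄ z x y w + hS₂₃ z x w y
      - hS₃₄ z w y x + hS₂₃ w x y z - hS₃₄ w y x z + hΩ.swap₁₂ x y z w - hΩ.swap₂₃ y x z w
      + hΩ.swap₃₄ y z x w
  linear_combination e₁ - e₂ + e₃ + 2 * e₄

theorem three_mul_eq_iff_three_mul_sub_eq {R R' S q : α → α → α → α → K}
    (hq : ∀ x y z w, q x y z w = -q y x z w)
    (hR' : ∀ x y z w, R' x y z w = R x y z w + S x y z w - S y x z w - q y z x w + q x z y w)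
    (x y z w : α) :
    3 * R' x y z w = 3 * R x y z w + 2 * q x y z w + q z y x w + q x z y w ↔
      3 * (S x y z w - S y x z w) = 2 * cyclicSum q x y z w := by
  unfold cyclicSum
  rw [hR']
  constructor <;> intro h
  · linear_combination h + hq z y x w - 2 * hq x z y w
  · linear_combination h - hq z y x w + 2 * hq x z y w

end CommRing

variable [Field K] [CharZero K]

theorem cyclicSum_eq_iff {S Ω : α → α → α → α → K}
    (hS₂₃ : ∀ x y z w, S x y z w = -S x z y w) (hS₃₄ : ∀ x y z w, S x y z w = -S x y w z)
    (hΩ : IsAlternating Ω) :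
    (∀ x y z w, cyclicSum S x y z w = Ω x y z w) ↔
      ∀ x y z w, 3 * (S x y z w - S y x z w) = 2 * Ω x y z w := by
  constructor
  · intro h x y z w
    linear_combination three_mul_eq_of_cyclicSum_eq hS₂₃ hS₃₄ hΩ h x y z w
      - three_mul_eq_of_cyclicSum_eq hS₂₃ hS₃₄ hΩ h y x z w - hΩ.swap₁₂ x y z w
  · intro h x y z w
    have h₃ : 3 * (2 * cyclicSum S x y z w) = 2 * cyclicSum Ω x y z w := by
      unfold cyclicSum
      linear_combination h x y z w + h y z x w + h z x y w + 3 * hS₂₃ y x z w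
        + 3 * hS₂₃ z y x w + 3 * hS₂₃ x z y w
    rw [hΩ.cyclicSum_eq] at h₃
    linear_combination h₃ / 6

theorem forall_cyclicSum_eq_zero_iff {R R' S q : α → α → α → α → K}
    (hR : ∀ x y z w, cyclicSum R x y z w = 0) (hS₂₃ : ∀ x y z w, S x y z w = -S x z y w)
    (hq : ∀ x y z w, q x y z w = -q y x z w)
    (hR' : ∀ x y z w, R' x y z w = R x y z w + S x y z w - S y x z w - q y z x w + q x z y w) :
    (∀ x y z w, cyclicSum R' x y z w = 0) ↔
      ∀ x y z w, cyclicSum S x y z w = cyclicSum q x y z w := by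
  have key : ∀ x y z w,
      cyclicSum R' x y z w = 2 * (cyclicSum S x y z w - cyclicSum q x y z w) := by
    intro x y z w
    have hRxyz := hR x y z w
    unfold cyclicSum at hRxyz ⊢
    rw [hR', hR', hR']
    linear_combination hRxyz
      - hS₂₃ y x z w - hS₂₃ z y x w - hS₂₃ x y z w + hq x z y w + hq y x z w + hq z y x w
  simp only [key, mul_eq_zero, two_ne_zero, false_or, sub_eq_zero]

end CyclicSum

theorem stmt7_general
    (V : Type*) [AddCommGroup V] [Module ℝ V]
    (g : V →ₗ[ℝ] V →ₗ[ℝ] ℝ)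
    (hgsymm : ∀ x y : V, g x y = g y x)
    (Q : V →ₗ[ℝ] V →ₗ[ℝ] V)
    (hQskew1 : ∀ x y z : V, g (Q x y) z = -(g (Q y x) z))
    (S : V →ₗ[ℝ] V →ₗ[ℝ] V →ₗ[ℝ] V →ₗ[ℝ] ℝ)
    (hS1 : ∀ x y z w : V, S x y z w = -(S x z y w))
    (hS2 : ∀ x y z w : V, S x y z w = -(S x y w z))
    (R : V →ₗ[ℝ] V →ₗ[ℝ] V →ₗ[ℝ] V →ₗ[ℝ] ℝ)
    (hRB : ∀ x y z w : V, R x y z w + R y z x w + R z x y w = 0)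
    (R' : V → V → V → V → ℝ)
    (hR' : ∀ x y z w : V, R' x y z w = R x y z w + S x y z w - S y x z w
      - g (Q y z) (Q x w) + g (Q x z) (Q y w))
    :
    (∀ x y z w : V, R' x y z w + R' y z x w + R' z x y w = 0)
    ↔
    (∀ x y z w : V, 3 * R' x y z w = 3 * R x y z w + 2 * g (Q x y) (Q z w)
      + g (Q z y) (Q x w) + g (Q x z) (Q y w)) := by
  let q : V → V → V → V → ℝ := fun x y z w => g (Q x y) (Q z w)
  have hq : ∀ x y z w, q x y z w = -q y x z w := fun x y z w => hQskew1 x y (Q z w)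
  have hq_symm : ∀ x y z w, q x y z w = q z w x y := fun x y z w => hgsymm _ _
  calc (∀ x y z w, cyclicSum R' x y z w = 0)
      ↔ ∀ x y z w, cyclicSum (fun x y z w => S x y z w) x y z w = cyclicSum q x y z w :=
        forall_cyclicSum_eq_zero_iff hRB hS1 hq hR'
    _ ↔ ∀ x y z w, 3 * (S x y z w - S y x z w) = 2 * cyclicSum q x y z w :=
        cyclicSum_eq_iff hS1 hS2 (isAlternating_cyclicSum hq hq_symm)
    _ ↔ _ := forall₄_congr fun x y z w => (three_mul_eq_iff_three_mul_sub_eq hq hR' x y z w).symm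

theorem stmt7
    (V : Type*) [AddCommGroup V] [Module ℝ V] [FiniteDimensional ℝ V]
    (g : V →ₗ[ℝ] V →ₗ[ℝ] ℝ)
    (hgsymm : ∀ x y : V, g x y = g y x)
    (hgnd : ∀ x : V, (∀ y : V, g x y = 0) → x = 0)
    (Q : V →ₗ[ℝ] V →ₗ[ℝ] V)
    (hQskew1 : ∀ x y z : V, g (Q x y) z = -(g (Q y x) z))
    (hQskew2 : ∀ x y z : V, g (Q x y) z = -(g (Q x z) y))
    (S : V →ₗ[ℝ] V →ₗ[ℝ] V →ₗ[ℝ] V →ₗ[ℝ] ℝ)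
    (hS1 : ∀ x y z w : V, S x y z w = -(S x z y w))
    (hS2 : ∀ x y z w : V, S x y z w = -(S x y w z))
    (R : V →ₗ[ℝ] V →ₗ[ℝ] V →ₗ[ℝ] V →ₗ[ℝ] ℝ)
    (hR1 : ∀ x y z w : V, R x y z w = -(R y x z w))
    (hR2 : ∀ x y z w : V, R x y z w = -(R x y w z))
    (hRB : ∀ x y z w : V, R x y z w + R y z x w + R z x y w = 0)
    (R' : V → V → V → V → ℝ)
    (hR' : ∀ x y z w : V, R' x y z w = R x y z w + S x y z w - S y x z w
      - g (Q y z) (Q x w) + g (Q x z) (Q y w))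
    :
    (∀ x y z w : V, R' x y z w + R' y z x w + R' z x y w = 0)
    ↔
    (∀ x y z w : V, 3 * R' x y z w = 3 * R x y z w + 2 * g (Q x y) (Q z w)
      + g (Q z y) (Q x w) + g (Q x z) (Q y w)) :=
  stmt7_general V g hgsymm Q hQskew1 S hS1 hS2 R hRB R' hR'
end
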